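/- Let V be a finite-dimensional real vector space and write a closed convex cone C as C = C₀ + ℝ₊v₁ + ⋯ + ℝ₊vₘ, where C₀ is a closed convex cone and v₁,…,vₘ ∈ V. If R = ℝ₊w is an extremal ray of C with w not proportional to any vᵢ, then R ⊆ C₀ and R is an extremal ray of C₀. -/

import Mathlib

/-!
Write `w = c₀ + ∑ tᵢ vᵢ`. For each `i` this splits `w` as `tᵢ vᵢ + (c₀ + ∑_{j ≠ i} tⱼ vⱼ)`, a sum of two
elements of `C`, so by extremality `tᵢ vᵢ` is a nonnegative multiple of `w`; since `w` is not
proportional to `vᵢ`, that multiple is `0`. Hence `w = c₀ ∈ C₀`, and extremality passes to the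
subcone `C₀ ⊆ C`.
-/

/-- `v` spans an extremal ray of the cone `C`. -/
def IsExtremalVec {V : Type*} [AddCommGroup V] [Module ℝ V] (C : Set V) (v : V) : Prop :=
  v ∈ C ∧ v ≠ 0 ∧ ∀ x ∈ C, ∀ y ∈ C, (∃ c : ℝ, 0 ≤ c ∧ x + y = c • v) →
    (∃ a : ℝ, 0 ≤ a ∧ x = a • v) ∧ (∃ b : ℝ, 0 ≤ b ∧ y = b • v)

namespace IsExtremalVec

variable {V : Type*} [AddCommGroup V] [Module ℝ V] {C : Set V} {w : V}

theorem of_subset {D : Set V} (hw : IsExtremalVec C w) (hDC : D ⊆ C) (hwD : w ∈ D) :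
    IsExtremalVec D w :=
  ⟨hwD, hw.2.1, fun x hx y hy h => hw.2.2 x (hDC hx) y (hDC hy) h⟩

theorem smul_eq_zero_of_add_eq {u y : V} {s : ℝ} (hw : IsExtremalVec C w)
    (hu : ∀ c : ℝ, w ≠ c • u) (hsu : s • u ∈ C) (hy : y ∈ C) (h : s • u + y = w) :
    s • u = 0 := by
  obtain ⟨⟨a, -, ha⟩, -⟩ := hw.2.2 _ hsu _ hy ⟨1, zero_le_one, by rw [one_smul, h]⟩
  rcases eq_or_ne a 0 with rfl | ha0
  · rwa [zero_smul] at ha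
  · refine absurd ?_ (hu (a⁻¹ * s))
    rw [mul_smul, ha, smul_smul, inv_mul_cancel₀ ha0, one_smul]

end IsExtremalVec

section ConeSum

variable {V ι : Type*} [AddCommGroup V] [Module ℝ V] [Fintype ι]
  {C C₀ : Set V} {v : ι → V} {w : V}

theorem subset_of_eq_add_cone (hC : C = {x : V | ∃ c₀ ∈ C₀, ∃ t : ι → ℝ,
    (∀ i, 0 ≤ t i) ∧ x = c₀ + ∑ i, t i • v i}) : C₀ ⊆ C := by
  intro x hx
  rw [hC]
  exact ⟨x, hx, 0, fun _ => le_rfl, by simp⟩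

theorem mem_of_isExtremalVec_of_eq_add_cone (hC₀zero : (0 : V) ∈ C₀)
    (hC : C = {x : V | ∃ c₀ ∈ C₀, ∃ t : ι → ℝ, (∀ i, 0 ≤ t i) ∧ x = c₀ + ∑ i, t i • v i})
    (hw : IsExtremalVec C w) (hnotprop : ∀ i, ∀ c : ℝ, w ≠ c • v i) : w ∈ C₀ := by
  classical
  obtain ⟨c₀, hc₀, t, ht, rfl⟩ := hC ▸ hw.1
  have hterm : ∀ i, t i • v i = 0 := by
    intro i
    have hsingle : t i • v i ∈ C := by
      rw [hC]
      refine ⟨0, hC₀zero, Pi.single i (t i), fun j => ?_, by simp⟩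
      rcases eq_or_ne j i with rfl | hj <;> simp [*]
    have hrest : c₀ + ∑ j, (t - Pi.single i (t i) : ι → ℝ) j • v j ∈ C := by
      rw [hC]
      refine ⟨c₀, hc₀, _, fun j => ?_, rfl⟩
      rcases eq_or_ne j i with rfl | hj <;> simp [*]
    refine hw.smul_eq_zero_of_add_eq (hnotprop i) hsingle hrest ?_
    simp only [Pi.sub_apply, sub_smul, Finset.sum_sub_distrib, Fintype.sum_single_smul]
    abel
  simpa [hterm] using hc₀

end ConeSum

theorem stmt_10_general {V : Type*} [NormedAddCommGroup V] [NormedSpace ℝ V]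
    (C C₀ : Set V) {m : ℕ} (v : Fin m → V) (w : V)
    (hC₀zero : (0 : V) ∈ C₀)
    (hC : C = {x : V | ∃ c₀ ∈ C₀, ∃ t : Fin m → ℝ,
        (∀ i, 0 ≤ t i) ∧ x = c₀ + ∑ i, t i • v i})
    (hext : IsExtremalVec C w)
    (hnotprop : ∀ i, ∀ c : ℝ, w ≠ c • v i) :
    w ∈ C₀ ∧ IsExtremalVec C₀ w := by
  have hwC₀ := mem_of_isExtremalVec_of_eq_add_cone hC₀zero hC hext hnotprop
  exact ⟨hwC₀, hext.of_subset (subset_of_eq_add_cone hC) hwC₀⟩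

/-- If a closed convex cone decomposes as
`C = C₀ + ℝ₊v₁ + ⋯ + ℝ₊vₘ` with `C₀` a closed convex cone, and `ℝ₊w` is an
extremal ray of `C` with `w` not proportional to any `vᵢ`, then `w ∈ C₀`
(so the ray lies in `C₀`) and `w` spans an extremal ray of `C₀`. -/
theorem stmt_10 {V : Type*} [NormedAddCommGroup V] [NormedSpace ℝ V]
    [FiniteDimensional ℝ V] (C C₀ : Set V) {m : ℕ} (v : Fin m → V) (w : V)
    (hC₀closed : IsClosed C₀) (hC₀zero : (0 : V) ∈ C₀)
    (hC₀add : ∀ x ∈ C₀, ∀ y ∈ C₀, x + y ∈ C₀)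
    (hC₀smul : ∀ (c : ℝ), 0 ≤ c → ∀ x ∈ C₀, c • x ∈ C₀)
    (hC : C = {x : V | ∃ c₀ ∈ C₀, ∃ t : Fin m → ℝ,
        (∀ i, 0 ≤ t i) ∧ x = c₀ + ∑ i, t i • v i})
    (hext : IsExtremalVec C w)
    (hnotprop : ∀ i, ∀ c : ℝ, w ≠ c • v i) :
    w ∈ C₀ ∧ IsExtremalVec C₀ w :=
  stmt_10_general C C₀ v w hC₀zero hC hext hnotprop
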